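/- The set of vectors w = (w₁,w₂,w₃,w₄,w₅,w₆) ∈ ℝ⁶ satisfying the four conditions (i) w₁ = w₆ = 0, (ii) 4((2−√2)w₂ + (−2+2√2)w₃ + (2−√2)w₅) = π, (iii) w₂ − w₅ = 0, and (iv) (−5+2√2)w₂ + (4−4√2)w₃ + (3−2√2)w₄ + (−7+6√2)w₅ = 0, is exactly the line {(π/16)·(0, 1+√2, √2, 12+8√2, 1+√2, 0) + t·(0, 1, −√2, −4−4√2, 1, 0) : t ∈ ℝ}. -/
import Mathlib


noncomputable section

/-- Proposition 2 of the paper: the complete solution of the linear system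
characterizing asymptotically unbiased boundary-length estimators with `O(a²)` bias,
for Boolean models with ball grains.  Weight vectors are `w : Fin 6 → ℝ`, with `w i`
the weight of configuration class `η_{i+1}`. -/
theorem stmt_4 :
    {w : Fin 6 → ℝ |
        w 0 = 0 ∧ w 5 = 0 ∧
        4 * ((2 - Real.sqrt 2) * w 1 + (-2 + 2 * Real.sqrt 2) * w 2 +
            (2 - Real.sqrt 2) * w 4) = Real.pi ∧
        w 1 - w 4 = 0 ∧
        (-5 + 2 * Real.sqrt 2) * w 1 + (4 - 4 * Real.sqrt 2) * w 2 +
            (3 - 2 * Real.sqrt 2) * w 3 + (-7 + 6 * Real.sqrt 2) * w 4 = 0} =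
      {w : Fin 6 → ℝ | ∃ t : ℝ,
        w = (Real.pi / 16) •
              ![0, 1 + Real.sqrt 2, Real.sqrt 2, 12 + 8 * Real.sqrt 2, 1 + Real.sqrt 2, 0] +
            t • ![0, 1, -Real.sqrt 2, -4 - 4 * Real.sqrt 2, 1, 0]} := by
  have hs : Real.sqrt 2 ^ 2 = 2 := Real.sq_sqrt (by norm_num)
  set s := Real.sqrt 2 with hsdef
  ext w
  simp only [Set.mem_setOf_eq]
  constructor
  · rintro ⟨h0, h5, hA, hB, hC⟩
    refine ⟨w 1 - Real.pi * (1 + s) / 16, ?_⟩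
    funext i
    fin_cases i
    · show w 0 = Real.pi / 16 * 0 + (w 1 - Real.pi * (1 + s) / 16) * 0
      linarith
    · show w 1 = Real.pi / 16 * (1 + s) + (w 1 - Real.pi * (1 + s) / 16) * 1
      ring
    · show w 2 = Real.pi / 16 * s + (w 1 - Real.pi * (1 + s) / 16) * (-s)
      linear_combination ((s + 1) / 8) * hA + (s / 2) * hB +
        (-(w 2) + w 1 / 2 + w 4 / 2 - Real.pi / 16) * hs
    · show w 3 = Real.pi / 16 * (12 + 8 * s) +
        (w 1 - Real.pi * (1 + s) / 16) * (-4 - 4 * s)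
      linear_combination (3 + 2 * s) * hC + ((3 + 2 * s) / 2) * hA + (7 + 6 * s) * hB +
        (4 * w 3 - 8 * w 4 - Real.pi / 4) * hs
    · show w 4 = Real.pi / 16 * (1 + s) + (w 1 - Real.pi * (1 + s) / 16) * 1
      linear_combination -hB
    · show w 5 = Real.pi / 16 * 0 + (w 1 - Real.pi * (1 + s) / 16) * 0
      linarith
  · rintro ⟨t, rfl⟩
    refine ⟨?_, ?_, ?_, ?_, ?_⟩
    · show Real.pi / 16 * 0 + t * 0 = 0
      ring
    · show Real.pi / 16 * 0 + t * 0 = 0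
      ring
    · show 4 * ((2 - s) * (Real.pi / 16 * (1 + s) + t * 1) +
          (-2 + 2 * s) * (Real.pi / 16 * s + t * (-s)) +
          (2 - s) * (Real.pi / 16 * (1 + s) + t * 1)) = Real.pi
      linear_combination (-8 * t) * hs
    · show (Real.pi / 16 * (1 + s) + t * 1) - (Real.pi / 16 * (1 + s) + t * 1) = 0
      ring
    · show (-5 + 2 * s) * (Real.pi / 16 * (1 + s) + t * 1) +
          (4 - 4 * s) * (Real.pi / 16 * s + t * (-s)) +
          (3 - 2 * s) * (Real.pi / 16 * (12 + 8 * s) + t * (-4 - 4 * s)) +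
          (-7 + 6 * s) * (Real.pi / 16 * (1 + s) + t * 1) = 0
      linear_combination (-3 * Real.pi / 4 + 12 * t) * hs

end
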